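/- Let Y be a pure 4-dimensional simplicial complex on at most 7 vertices in which every 3-face is contained in at least two facets. Then Y contains a subcomplex which is a combinatorial 4-sphere; more precisely, Y contains either the standard 4-sphere on some 6 of its vertices, or the join of the standard spheres on the two parts of some partition V(Y) = V₁ ⊔ V₂ with |V₁|, |V₂| ≥ 2. -/

import Mathlib

/- Formalization of definitions from:
   B. Bagchi, B. Datta, "Combinatorial triangulations of homology spheres". -/

open Finset

noncomputable section

attribute [local instance] Classical.propDecidable

namespace HomologySpheres

variable {V : Type*} [DecidableEq V] {W : Type*} [DecidableEq W]

/-- The vertex set of a finite family of finite sets. -/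
def verts (K : Finset (Finset V)) : Finset V := K.sup id

/-- An (abstract, finite) simplicial complex: a nonempty collection of nonempty
finite sets closed under taking nonempty subsets. -/
def IsComplex (K : Finset (Finset V)) : Prop :=
  K.Nonempty ∧ ∅ ∉ K ∧ ∀ s ∈ K, ∀ t : Finset V, t ⊆ s → t.Nonempty → t ∈ K

/-- The facets (maximal faces) of `K`. -/
def facets (K : Finset (Finset V)) : Finset (Finset V) :=
  K.filter fun s => ∀ t ∈ K, s ⊆ t → t = s

/-- `K` is pure of dimension `d`: every maximal face has `d + 1` vertices. -/
def IsPure (d : ℕ) (K : Finset (Finset V)) : Prop :=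
  ∀ s ∈ facets K, s.card = d + 1

/-- The link of a face `σ` in `K`. -/
def link (K : Finset (Finset V)) (σ : Finset V) : Finset (Finset V) :=
  K.filter fun τ => Disjoint τ σ ∧ τ ∪ σ ∈ K

/-- `L` is an induced (full) subcomplex of `K`. -/
def IsInduced (K L : Finset (Finset V)) : Prop :=
  L ⊆ K ∧ ∀ s ∈ K, s ⊆ verts L → s ∈ L

/-- The simplicial complement `C(L, K)`: the induced subcomplex of `K` on
`V(K) \ V(L)`. -/
def simpComplement (L K : Finset (Finset V)) : Finset (Finset V) :=
  K.filter fun s => s ⊆ verts K \ verts L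

/-- The simplicial neighbourhood `N(L, K)`: the subcomplex of `K` whose maximal
faces are the maximal faces of `K` meeting `V(L)`. -/
def simpNbhd (L K : Finset (Finset V)) : Finset (Finset V) :=
  K.filter fun s => ∃ t ∈ facets K, s ⊆ t ∧ (t ∩ verts L).Nonempty

/-- `fvec K i` is the number of `i`-dimensional faces of `K`. -/
def fvec (K : Finset (Finset V)) (i : ℕ) : ℕ :=
  (K.filter fun s => s.card = i + 1).card

/-- The number of facets of cardinality `d + 1` containing a given `(d-1)`-face
(the degree of the face in a (weak) pseudomanifold of dimension `d`). -/
def degOf (K : Finset (Finset V)) (d : ℕ) (s : Finset V) : ℕ :=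
  (K.filter fun t => s ⊆ t ∧ t.card = d + 1).card

/-- Simplicial isomorphism (via a vertex bijection carrying faces to faces). -/
def Iso (K : Finset (Finset V)) (L : Finset (Finset W)) : Prop :=
  ∃ f : V → W, Set.InjOn f ↑(verts K) ∧ L = K.image (Finset.image f)

/-- The join of two simplicial complexes (on disjoint vertex sets). -/
def sjoin (K L : Finset (Finset V)) : Finset (Finset V) :=
  K ∪ L ∪ (K ×ˢ L).image fun p => p.1 ∪ p.2

/-- The standard ball on vertex set `A`: all nonempty subsets of `A`. -/
def stdBall (A : Finset V) : Finset (Finset V) := A.powerset.erase ∅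

/-- The standard sphere on vertex set `A`: all nonempty proper subsets of `A`. -/
def stdSphere (A : Finset V) : Finset (Finset V) := (A.powerset.erase ∅).erase A

/-- `τ` is a free face of `K`, with `σ` the unique face properly containing it. -/
def IsFreeFace (K : Finset (Finset V)) (τ σ : Finset V) : Prop :=
  τ ∈ K ∧ σ ∈ K ∧ τ ⊂ σ ∧ ∀ ρ ∈ K, τ ⊂ ρ → ρ = σ

/-- An elementary collapse removes a free face together with the unique face
properly containing it. -/
def ElemCollapse (K K' : Finset (Finset V)) : Prop :=
  ∃ τ σ : Finset V, IsFreeFace K τ σ ∧ K' = (K.erase τ).erase σ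

/-- `K` collapses to `L` by a sequence of elementary collapses. -/
def CollapsesTo (K L : Finset (Finset V)) : Prop :=
  Relation.ReflTransGen ElemCollapse K L

/-- `K` is collapsible: it collapses to a single vertex. -/
def Collapsible (K : Finset (Finset V)) : Prop :=
  ∃ v : V, CollapsesTo K {{v}}

/-! ### Simplicial homology with `ℤ/2` coefficients (augmented chain complex).
A chain of level `n` is a `ZMod 2`-valued function supported on the faces of
cardinality `n` (the empty set, of cardinality `0`, serves as the `(-1)`-simplex
of the augmented complex).  Reduced homology in dimension `q` lives at level
`q + 1`. -/

/-- `c` is a chain of level `n` of `K` (over `ℤ/2`). -/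
def z2chainOK (K : Finset (Finset V)) (n : ℕ) (c : Finset V → ZMod 2) : Prop :=
  ∀ s : Finset V, c s ≠ 0 → s.card = n ∧ (s ∈ K ∨ s = ∅)

/-- The mod-2 boundary operator. -/
def z2bdry (K : Finset (Finset V)) (c : Finset V → ZMod 2) : Finset V → ZMod 2 :=
  fun t => ∑ v ∈ verts K \ t, c (insert v t)

/-- `K` is `ℤ/2`-acyclic: all reduced homology with `ℤ/2` coefficients vanishes,
i.e. in the augmented mod-2 chain complex every cycle is a boundary. -/
def Z2Acyclic (K : Finset (Finset V)) : Prop :=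
  ∀ (n : ℕ) (c : Finset V → ZMod 2), z2chainOK K n c → z2bdry K c = 0 →
    ∃ c', z2chainOK K (n + 1) c' ∧ z2bdry K c' = c

/-- `K` has the reduced `ℤ/2`-homology of the `d`-sphere: reduced homology
vanishes in all dimensions except `d` (level `d + 1`), where it is `ℤ/2`
(there is a cycle `z` which is not a boundary, and modulo boundaries every
cycle is `0` or `z`). -/
def Z2HomologySphere (d : ℕ) (K : Finset (Finset V)) : Prop :=
  (∀ (n : ℕ) (c : Finset V → ZMod 2), n ≠ d + 1 → z2chainOK K n c →
    z2bdry K c = 0 → ∃ c', z2chainOK K (n + 1) c' ∧ z2bdry K c' = c) ∧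
  (∃ z : Finset V → ZMod 2, z2chainOK K (d + 1) z ∧ z2bdry K z = 0 ∧
    (∀ c', z2chainOK K (d + 2) c' → z2bdry K c' ≠ z) ∧
    (∀ z', z2chainOK K (d + 1) z' → z2bdry K z' = 0 →
      (∃ c', z2chainOK K (d + 2) c' ∧ z2bdry K c' = z') ∨
      (∃ c', z2chainOK K (d + 2) c' ∧ z2bdry K c' = z + z')))

/-! ### Integral simplicial homology via ordered chains (Munkres §13: ordered
simplicial homology, allowing repeated vertices, agrees with simplicial
homology). An ordered `m`-tuple chain corresponds to dimension `m - 1`; the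
unique `0`-tuple is the `(-1)`-simplex of the augmented complex. -/

/-- `c` is an ordered chain of `K` over `ℤ`: supported on tuples whose image is
a face (the empty tuple being allowed in level `0`). -/
def zchainOK (K : Finset (Finset V)) {m : ℕ} (c : (Fin m → V) → ℤ) : Prop :=
  ∀ x : Fin m → V, c x ≠ 0 → (Finset.univ.image x ∈ K ∨ m = 0)

/-- The integral boundary operator on ordered chains. -/
def zbdry (K : Finset (Finset V)) {m : ℕ} (c : (Fin (m + 1) → V) → ℤ) :
    (Fin m → V) → ℤ :=
  fun y => ∑ i : Fin (m + 1), (-1 : ℤ) ^ (i : ℕ) * ∑ v ∈ verts K, c (i.insertNth v y)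

/-- `K` has the reduced integral homology of the `d`-sphere: reduced homology
vanishes in all dimensions except `d`, where it is infinite cyclic (there is a
cycle `z` such that every cycle is, modulo boundaries, a unique multiple of `z`). -/
def ZHomologySphere (d : ℕ) (K : Finset (Finset V)) : Prop :=
  (∀ c : (Fin 0 → V) → ℤ, ∃ c' : (Fin 1 → V) → ℤ, zchainOK K c' ∧ zbdry K c' = c) ∧
  (∀ (m : ℕ) (c : (Fin (m + 1) → V) → ℤ), m ≠ d → zchainOK K c → zbdry K c = 0 →
    ∃ c' : (Fin (m + 2) → V) → ℤ, zchainOK K c' ∧ zbdry K c' = c) ∧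
  (∃ z : (Fin (d + 1) → V) → ℤ, zchainOK K z ∧ zbdry K z = 0 ∧
    ∀ z' : (Fin (d + 1) → V) → ℤ, zchainOK K z' → zbdry K z' = 0 →
      ∃! k : ℤ, ∃ c'' : (Fin (d + 2) → V) → ℤ,
        zchainOK K c'' ∧ zbdry K c'' = z' - k • z)

/-- A weak pseudomanifold of dimension `d`: pure, and every `(d-1)`-face is in
exactly two facets. -/
def IsWeakPseudomanifold (d : ℕ) (K : Finset (Finset V)) : Prop :=
  IsComplex K ∧ IsPure d K ∧ ∀ s ∈ K, s.card = d → degOf K d s = 2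

/-- Adjacency of facets along a common `(d-1)`-face. -/
def FacetAdj (d : ℕ) (K : Finset (Finset V)) (s t : Finset V) : Prop :=
  s ∈ K ∧ t ∈ K ∧ s.card = d + 1 ∧ t.card = d + 1 ∧ (s ∩ t).card = d

/-- A pseudomanifold: a weak pseudomanifold in which any two facets are joined
by a chain of facets, consecutive ones sharing a `(d-1)`-face. -/
def IsPseudomanifold (d : ℕ) (K : Finset (Finset V)) : Prop :=
  IsWeakPseudomanifold d K ∧ ∀ s ∈ K, ∀ t ∈ K, s.card = d + 1 → t.card = d + 1 →
    Relation.ReflTransGen (FacetAdj d K) s t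

/-- A weak pseudomanifold with boundary. -/
def IsWeakPseudomanifoldWithBdry (d : ℕ) (K : Finset (Finset V)) : Prop :=
  IsComplex K ∧ IsPure d K ∧
  (∀ s ∈ K, s.card = d → degOf K d s = 1 ∨ degOf K d s = 2) ∧
  (∃ s ∈ K, s.card = d ∧ degOf K d s = 1)

/-- The boundary complex: all faces of degree-one `(d-1)`-faces. -/
def bdryComplex (d : ℕ) (K : Finset (Finset V)) : Finset (Finset V) :=
  K.filter fun t => ∃ s ∈ K, t ⊆ s ∧ s.card = d ∧ degOf K d s = 1

/-- `K` is connected (any two vertices joined by a path of edges). -/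
def SConnected (K : Finset (Finset V)) : Prop :=
  ∀ u ∈ verts K, ∀ v ∈ verts K,
    Relation.ReflTransGen (fun a b : V => ({a, b} : Finset V) ∈ K) u v

/-! ### Geometric realizations, subdivisions and combinatorial equivalence. -/

/-- A geometric simplicial complex in `ℝ^ℕ`: finitely many geometric simplices
(affinely independent vertex sets), closed under faces, any two of which meet
in a common face. -/
structure GComplex where
  faces : Finset (Finset (ℕ → ℝ))
  nonempty : faces.Nonempty
  empty_not_mem : ∅ ∉ faces
  down_closed : ∀ s ∈ faces, ∀ t : Finset (ℕ → ℝ), t ⊆ s → t.Nonempty → t ∈ faces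
  indep : ∀ s ∈ faces,
    AffineIndependent ℝ (fun x : {y : ℕ → ℝ // y ∈ s} => (x : ℕ → ℝ))
  glue : ∀ s ∈ faces, ∀ t ∈ faces,
    convexHull ℝ (s : Set (ℕ → ℝ)) ∩ convexHull ℝ (t : Set (ℕ → ℝ)) =
      convexHull ℝ ((s ∩ t : Finset (ℕ → ℝ)) : Set (ℕ → ℝ))

/-- The geometric carrier (underlying polyhedron) of a geometric complex. -/
def GComplex.carrier (G : GComplex) : Set (ℕ → ℝ) :=
  ⋃ s ∈ G.faces, convexHull ℝ (s : Set (ℕ → ℝ))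

/-- `G` realizes the abstract complex `K` via the vertex map `f`. -/
def RealizesMap (G : GComplex) (K : Finset (Finset V)) (f : V → ℕ → ℝ) : Prop :=
  Set.InjOn f ↑(verts K) ∧ G.faces = K.image (Finset.image f)

/-- `G` is a geometric realization of the abstract complex `K`. -/
def Realizes (G : GComplex) (K : Finset (Finset V)) : Prop :=
  ∃ f : V → ℕ → ℝ, RealizesMap G K f

/-- `G'` is a subdivision of `G`: same carrier, and every simplex of `G'` is
contained in a simplex of `G`. -/
def Subdivides (G' G : GComplex) : Prop :=
  G'.carrier = G.carrier ∧
  ∀ s ∈ G'.faces, ∃ t ∈ G.faces,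
    convexHull ℝ (s : Set (ℕ → ℝ)) ⊆ convexHull ℝ (t : Set (ℕ → ℝ))

/-- Combinatorial equivalence: `K` and `L` admit isomorphic subdivisions. -/
def CombEquiv (K : Finset (Finset V)) (L : Finset (Finset W)) : Prop :=
  ∃ G1 G1' G2 G2' : GComplex, Realizes G1 K ∧ Realizes G2 L ∧
    Subdivides G1' G1 ∧ Subdivides G2' G2 ∧ Iso G1'.faces G2'.faces

/-- A combinatorial `d`-ball: combinatorially equivalent to the standard ball. -/
def IsCombBall (d : ℕ) (K : Finset (Finset V)) : Prop :=
  ∃ A : Finset ℕ, A.card = d + 1 ∧ CombEquiv K (stdBall A)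

/-- A combinatorial `d`-sphere: combinatorially equivalent to the standard sphere. -/
def IsCombSphere (d : ℕ) (K : Finset (Finset V)) : Prop :=
  ∃ A : Finset ℕ, A.card = d + 2 ∧ CombEquiv K (stdSphere A)

/-- A combinatorial `d`-manifold: every vertex link is a combinatorial
`(d-1)`-sphere. -/
def IsCombManifold (d : ℕ) (K : Finset (Finset V)) : Prop :=
  IsComplex K ∧ ∀ v ∈ verts K, IsCombSphere (d - 1) (link K {v})

/-- A combinatorial `d`-manifold with boundary. -/
def IsCombManifoldWithBdry (d : ℕ) (K : Finset (Finset V)) : Prop :=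
  IsComplex K ∧
  (∀ v ∈ verts K, IsCombSphere (d - 1) (link K {v}) ∨
    IsCombBall (d - 1) (link K {v})) ∧
  (∃ v ∈ verts K, IsCombBall (d - 1) (link K {v}))

/-- A pl `k`-ball: a polyhedron carried by some geometric complex whose face
structure is a combinatorial `k`-ball. -/
def IsPLBall (k : ℕ) (P : Set (ℕ → ℝ)) : Prop :=
  ∃ G : GComplex, G.carrier = P ∧ IsCombBall k G.faces

/-- Elementary polyhedral collapse: `P = P' ∪ B` with `B` a pl `k`-ball and
`P' ∩ B` a pl `(k-1)`-ball. -/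
def PolyElemCollapse (P P' : Set (ℕ → ℝ)) : Prop :=
  ∃ k : ℕ, 1 ≤ k ∧ ∃ B : Set (ℕ → ℝ),
    IsPLBall k B ∧ P = P' ∪ B ∧ IsPLBall (k - 1) (P' ∩ B)

/-- Polyhedral collapse. -/
def PolyCollapsesTo (P Q : Set (ℕ → ℝ)) : Prop :=
  Relation.ReflTransGen PolyElemCollapse P Q

/-- Carrier of a subcomplex under a vertex realization map `f`. -/
def subCarrier (f : V → ℕ → ℝ) (L : Finset (Finset V)) : Set (ℕ → ℝ) :=
  ⋃ s ∈ L, convexHull ℝ ((s.image f : Finset (ℕ → ℝ)) : Set (ℕ → ℝ))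

/-! ### Bistellar moves. -/

/-- The core `β = {x ∈ A : A \ {x} ∈ X}` of a `(d+2)`-set `A`. -/
def bcore (X : Finset (Finset V)) (A : Finset V) : Finset V :=
  A.filter fun x => A.erase x ∈ X

/-- `κ_A` is a bistellar `i`-move on the `d`-dimensional complex `X`:
`A` has `d + 2` elements and contains at least one and at most `d + 1` facets
of `X`; with `β` the core of `A` and `α = A \ β` an `i`-face of `X`, one has
`β ∉ X`, and either `α` is a facet of `X` or `Lk_X(α)` has vertex set `β`. -/
def BistellarIMove (d i : ℕ) (X : Finset (Finset V)) (A : Finset V) : Prop :=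
  A.card = d + 2 ∧
  0 < ((facets X).filter fun σ => σ ⊆ A).card ∧
  ((facets X).filter fun σ => σ ⊆ A).card ≤ d + 1 ∧
  bcore X A ∉ X ∧
  A \ bcore X A ∈ X ∧ (A \ bcore X A).card = i + 1 ∧
  (A \ bcore X A ∈ facets X ∨ verts (link X (A \ bcore X A)) = bcore X A)

/-! ### The explicit small complexes of the paper. -/

/-- The complex generated by a list of facets: all nonempty subsets thereof. -/
def genBy (F : Finset (Finset ℕ)) : Finset (Finset ℕ) :=
  F.sup fun s => s.powerset.erase ∅

/-- The standard 2-sphere `S²₄`. -/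
def S24 : Finset (Finset ℕ) := stdSphere {1, 2, 3, 4}

/-- The join `S¹₃ * S⁰₂`. -/
def S13S02 : Finset (Finset ℕ) := sjoin (stdSphere {1, 2, 3}) (stdSphere {4, 5})

/-- The octahedron `S⁰₂ * S⁰₂ * S⁰₂`. -/
def Octa : Finset (Finset ℕ) :=
  sjoin (stdSphere {1, 2}) (sjoin (stdSphere {3, 4}) (stdSphere {5, 6}))

/-- The 6-vertex real projective plane `ℝP²₆`. -/
def RP26 : Finset (Finset ℕ) :=
  genBy {{1, 2, 3}, {1, 2, 4}, {1, 3, 5}, {1, 4, 6}, {1, 5, 6},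
         {2, 3, 6}, {2, 4, 5}, {2, 5, 6}, {3, 4, 5}, {3, 4, 6}}

/-- `Σ₁`: the 6-vertex 2-sphere with a vertex of degree 3 and one of degree 5. -/
def Sigma1 : Finset (Finset ℕ) :=
  genBy {{1, 2, 5}, {1, 2, 6}, {1, 5, 6}, {2, 3, 5},
         {2, 3, 6}, {3, 4, 5}, {3, 4, 6}, {4, 5, 6}}

/-- The double pyramid `S¹₅ * S⁰₂`. -/
def S15S02 : Finset (Finset ℕ) :=
  sjoin (genBy {{1, 2}, {2, 3}, {3, 4}, {4, 5}, {1, 5}}) (stdSphere {6, 7})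

/-- `Σ₂` (7-vertex 2-sphere with 10 triangles). -/
def Sigma2 : Finset (Finset ℕ) :=
  genBy {{1, 2, 6}, {1, 2, 7}, {1, 6, 7}, {2, 3, 6}, {2, 3, 7},
         {3, 4, 6}, {3, 4, 7}, {4, 5, 6}, {4, 5, 7}, {5, 6, 7}}

/-- `Σ₃` (7-vertex 2-sphere with 10 triangles). -/
def Sigma3 : Finset (Finset ℕ) :=
  genBy {{1, 2, 6}, {1, 2, 7}, {1, 6, 7}, {2, 3, 4}, {2, 3, 7},
         {2, 4, 6}, {3, 4, 7}, {4, 5, 6}, {4, 5, 7}, {5, 6, 7}}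

/-- `Σ₄` (7-vertex 2-sphere with 10 triangles). -/
def Sigma4 : Finset (Finset ℕ) :=
  genBy {{1, 2, 4}, {1, 2, 7}, {1, 4, 5}, {1, 5, 6}, {1, 6, 7},
         {2, 3, 4}, {2, 3, 7}, {3, 4, 7}, {4, 5, 7}, {5, 6, 7}}

/-- `Σ₅` (7-vertex 2-sphere with 10 triangles). -/
def Sigma5 : Finset (Finset ℕ) :=
  genBy {{1, 2, 3}, {1, 2, 6}, {1, 3, 5}, {1, 5, 6}, {2, 3, 4},
         {2, 4, 6}, {3, 4, 5}, {4, 5, 7}, {4, 6, 7}, {5, 6, 7}}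

/-- `Υ₁ = S²₄ ∪ S²₄`: two tetrahedral spheres sharing exactly one vertex. -/
def Upsilon1 : Finset (Finset ℕ) :=
  stdSphere {1, 2, 3, 7} ∪ stdSphere {4, 5, 6, 7}

/-- `Υ₂ = S²₄ ∪ (S⁰₂ * S¹₃)`: a tetrahedral sphere and a join, where the two
common vertices span an edge of the `S²₄`. -/
def Upsilon2 : Finset (Finset ℕ) :=
  stdSphere {4, 5, 6, 7} ∪ sjoin (stdSphere {6, 7}) (stdSphere {1, 2, 3})

/-- The complex `R` obtained from `ℝP²₆` by the generalized bistellar 1-move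
`κ_A`, `A = {1, 2, 5, 6}` (all such choices of `A` yield isomorphic complexes). -/
def Rcomplex : Finset (Finset ℕ) :=
  genBy {{1, 2, 3}, {1, 2, 4}, {1, 2, 5}, {1, 2, 6}, {1, 3, 5},
         {1, 4, 6}, {2, 3, 6}, {2, 4, 5}, {3, 4, 5}, {3, 4, 6}}


/-!
Since every ridge lies in two facets, a facet `F` and a vertex `x ∈ F` can always be pivoted to
a second facet `(F \ {x}) ∪ {y}`, so `Y` has `6` or `7` vertices. On `6` vertices the pivots show
that all five-element sets are facets. On `7` vertices facets are complements of pairs; the pivot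
at a ridge `V \ {a, b, c}` shows that non-adjacency in the graph of these pairs is transitive, so
the graph is complete multipartite. A vertex adjacent to all others gives `S⁴₆` on the remaining
vertices; otherwise a part `V₁` and its complement `V₂` give the join of the standard spheres on
`V₁` and on `V₂`.

Both are combinatorial 4-spheres: the join `∂τ * ∂(σ \ τ ∪ {b})` is the stellar subdivision of
the boundary of the 5-simplex `σ` at its face `τ`, realised with the new vertex `b` at the
barycenter of `τ`.
-/

section Complexes

lemma mem_verts {K : Finset (Finset V)} {a : V} : a ∈ verts K ↔ ∃ s ∈ K, a ∈ s := by
  simp [verts, mem_sup]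

lemma subset_verts {K : Finset (Finset V)} {s : Finset V} (hs : s ∈ K) : s ⊆ verts K :=
  fun _ ha => mem_verts.2 ⟨s, hs, ha⟩

lemma mem_stdSphere {A s : Finset V} : s ∈ stdSphere A ↔ s.Nonempty ∧ s ⊆ A ∧ ¬A ⊆ s := by
  simp only [stdSphere, mem_erase, mem_powerset, nonempty_iff_ne_empty]
  exact ⟨fun ⟨hA, h0, hs⟩ => ⟨h0, hs, fun h => hA (hs.antisymm h)⟩,
    fun ⟨h0, hs, hA⟩ => ⟨fun h => hA h.ge, h0, hs⟩⟩

lemma singleton_mem_stdSphere {A : Finset V} (hA : 2 ≤ A.card) {a : V} (ha : a ∈ A) :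
    {a} ∈ stdSphere A := by
  refine mem_stdSphere.2 ⟨singleton_nonempty a, singleton_subset_iff.2 ha, ?_⟩
  intro h
  have := card_le_card h
  rw [card_singleton] at this
  omega

lemma verts_stdSphere {A : Finset V} (hA : 2 ≤ A.card) : verts (stdSphere A) = A := by
  ext a
  refine ⟨fun ha => ?_, fun ha => mem_verts.2 ⟨{a}, singleton_mem_stdSphere hA ha,
    mem_singleton_self a⟩⟩
  obtain ⟨s, hs, has⟩ := mem_verts.1 ha
  exact (mem_stdSphere.1 hs).2.1 has

lemma isComplex_stdSphere {A : Finset V} (hA : 2 ≤ A.card) : IsComplex (stdSphere A) := by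
  obtain ⟨a, ha⟩ := card_pos.1 (by omega : 0 < A.card)
  refine ⟨⟨{a}, singleton_mem_stdSphere hA ha⟩, fun h => (mem_stdSphere.1 h).1.ne_empty rfl,
    fun s hs t hts ht => ?_⟩
  obtain ⟨-, hsA, hAs⟩ := mem_stdSphere.1 hs
  exact mem_stdSphere.2 ⟨ht, hts.trans hsA, fun h => hAs (h.trans hts)⟩

lemma mem_sjoin {K L : Finset (Finset V)} {s : Finset V} :
    s ∈ sjoin K L ↔ s ∈ K ∨ s ∈ L ∨ ∃ a ∈ K, ∃ b ∈ L, s = a ∪ b := by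
  simp [sjoin, eq_comm, and_assoc]

lemma mem_sjoin_stdSphere {A B : Finset V} (hAB : Disjoint A B) (hA : A.Nonempty)
    (hB : B.Nonempty) {s : Finset V} :
    s ∈ sjoin (stdSphere A) (stdSphere B) ↔ s.Nonempty ∧ s ⊆ A ∪ B ∧ ¬A ⊆ s ∧ ¬B ⊆ s := by
  have not_subset_of_disjoint {C D : Finset V} (hC : C.Nonempty) (hCD : Disjoint C D)
      {t : Finset V} (ht : t ⊆ D) : ¬C ⊆ t := fun h =>
    hC.ne_empty (disjoint_self_iff_empty C |>.1 (hCD.mono_right (h.trans ht)))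
  have subset_of_subset_union {C D a b : Finset V} (hCD : Disjoint C D) (hb : b ⊆ D)
      (h : C ⊆ a ∪ b) : C ⊆ a := fun x hx =>
    (mem_union.1 (h hx)).resolve_right fun hxb => disjoint_left.1 hCD hx (hb hxb)
  rw [mem_sjoin]
  constructor
  · rintro (hs | hs | ⟨a, ha, b, hb, rfl⟩) <;> simp only [mem_stdSphere] at *
    · exact ⟨hs.1, hs.2.1.trans subset_union_left, hs.2.2,
        not_subset_of_disjoint hB hAB.symm hs.2.1⟩
    · exact ⟨hs.1, hs.2.1.trans subset_union_right,
        not_subset_of_disjoint hA hAB hs.2.1, hs.2.2⟩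
    · refine ⟨ha.1.mono subset_union_left, union_subset_union ha.2.1 hb.2.1,
        fun h => ha.2.2 (subset_of_subset_union hAB hb.2.1 h),
        fun h => hb.2.2 (subset_of_subset_union hAB.symm ha.2.1 (union_comm a b ▸ h))⟩
  · rintro ⟨hs, hsAB, hAs, hBs⟩
    have hsplit : s = s ∩ A ∪ s ∩ B := by
      rw [← inter_union_distrib_left, inter_eq_left.2 hsAB]
    have mem_part {C : Finset V} (hC : ¬C ⊆ s) (hne : (s ∩ C).Nonempty) :
        s ∩ C ∈ stdSphere C :=
      mem_stdSphere.2 ⟨hne, inter_subset_right,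
        fun h => hC (h.trans inter_subset_left)⟩
    rcases (s ∩ A).eq_empty_or_nonempty with hsA | hsA
    · rw [hsA, empty_union] at hsplit
      exact Or.inr (Or.inl (hsplit ▸ mem_part hBs (hsplit ▸ hs)))
    rcases (s ∩ B).eq_empty_or_nonempty with hsB | hsB
    · rw [hsB, union_empty] at hsplit
      exact Or.inl (hsplit ▸ mem_part hAs (hsplit ▸ hs))
    exact Or.inr (Or.inr ⟨_, mem_part hAs hsA, _, mem_part hBs hsB, hsplit⟩)

lemma isComplex_sjoin_stdSphere {A B : Finset V} (hAB : Disjoint A B) (hA : 2 ≤ A.card)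
    (hB : 2 ≤ B.card) : IsComplex (sjoin (stdSphere A) (stdSphere B)) := by
  have hA' : A.Nonempty := card_pos.1 (by omega)
  have hB' : B.Nonempty := card_pos.1 (by omega)
  refine ⟨(isComplex_stdSphere hA).1.mono fun s hs => mem_sjoin.2 (Or.inl hs),
    fun h => ((mem_sjoin_stdSphere hAB hA' hB').1 h).1.ne_empty rfl, fun s hs t hts ht => ?_⟩
  obtain ⟨-, hsAB, hAs, hBs⟩ := (mem_sjoin_stdSphere hAB hA' hB').1 hs
  exact (mem_sjoin_stdSphere hAB hA' hB').2
    ⟨ht, hts.trans hsAB, fun h => hAs (h.trans hts), fun h => hBs (h.trans hts)⟩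

lemma verts_sjoin (K L : Finset (Finset V)) : verts (sjoin K L) = verts K ∪ verts L := by
  ext a
  simp only [mem_verts, mem_sjoin, mem_union]
  constructor
  · rintro ⟨s, hs | hs | ⟨b, hb, c, hc, rfl⟩, has⟩
    · exact Or.inl ⟨s, hs, has⟩
    · exact Or.inr ⟨s, hs, has⟩
    · exact (mem_union.1 has).imp (fun h => ⟨b, hb, h⟩) fun h => ⟨c, hc, h⟩
  · rintro (⟨s, hs, has⟩ | ⟨s, hs, has⟩)
    · exact ⟨s, Or.inl hs, has⟩
    · exact ⟨s, Or.inr (Or.inl hs), has⟩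

end Complexes

section Isomorphisms

variable {U : Type*} [DecidableEq U]

lemma verts_image (K : Finset (Finset V)) (f : V → W) :
    verts (K.image (image f)) = (verts K).image f := by
  ext b
  simp only [mem_verts, mem_image]
  aesop

lemma stdSphere_image {A : Finset V} {f : V → W} (hf : Set.InjOn f A) :
    (stdSphere A).image (image f) = stdSphere (A.image f) := by
  ext u
  simp only [mem_image, mem_stdSphere]
  constructor
  · rintro ⟨t, ⟨ht, htA, hAt⟩, rfl⟩
    exact ⟨ht.image f, image_subset_image htA,
      fun h => hAt ((image_subset_image_iff_of_injOn hf le_rfl htA).1 h)⟩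
  · rintro ⟨hu, huA, hAu⟩
    obtain ⟨t, htA, rfl⟩ := subset_image_iff.1 huA
    exact ⟨t, ⟨image_nonempty.1 hu, htA, fun h => hAu (image_subset_image h)⟩, rfl⟩

lemma sjoin_image (K L : Finset (Finset V)) (f : V → W) :
    (sjoin K L).image (image f) =
      sjoin (K.image (image f)) (L.image (image f)) := by
  ext u
  simp only [mem_image, mem_sjoin]
  constructor
  · rintro ⟨t, ht | ht | ⟨a, ha, b, hb, rfl⟩, rfl⟩
    · exact Or.inl ⟨t, ht, rfl⟩
    · exact Or.inr (Or.inl ⟨t, ht, rfl⟩)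
    · exact Or.inr (Or.inr ⟨_, ⟨a, ha, rfl⟩, _, ⟨b, hb, rfl⟩, image_union a b⟩)
  · rintro (⟨t, ht, rfl⟩ | ⟨t, ht, rfl⟩ | ⟨_, ⟨a, ha, rfl⟩, _, ⟨b, hb, rfl⟩, rfl⟩)
    · exact ⟨t, Or.inl ht, rfl⟩
    · exact ⟨t, Or.inr (Or.inl ht), rfl⟩
    · exact ⟨a ∪ b, Or.inr (Or.inr ⟨a, ha, b, hb, rfl⟩), image_union a b⟩

lemma exists_injOn_image_eq [Nonempty W] {A : Finset V} {B : Finset W} (h : A.card = B.card) :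
    ∃ f : V → W, Set.InjOn f A ∧ A.image f = B := by
  let e := A.equivOfCardEq h
  let f : V → W := fun v => if hv : v ∈ A then e ⟨v, hv⟩ else Classical.arbitrary W
  have hf : ∀ v (hv : v ∈ A), f v = e ⟨v, hv⟩ := fun v hv => dif_pos hv
  refine ⟨f, fun a ha b hb hab => ?_, ?_⟩
  · rw [hf a ha, hf b hb] at hab
    exact congrArg Subtype.val (e.injective (Subtype.ext hab))
  · ext w
    simp only [mem_image]
    refine ⟨fun ⟨v, hv, hvw⟩ => hvw ▸ hf v hv ▸ (e ⟨v, hv⟩).2, fun hw => ?_⟩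
    exact ⟨e.symm ⟨w, hw⟩, (e.symm ⟨w, hw⟩).2, by simp [hf _ (e.symm ⟨w, hw⟩).2]⟩

lemma iso_stdSphere [Nonempty W] {A : Finset V} {B : Finset W} (hA : 2 ≤ A.card)
    (h : A.card = B.card) : Iso (stdSphere A) (stdSphere B) := by
  obtain ⟨f, hf, rfl⟩ := exists_injOn_image_eq h
  exact ⟨f, by rwa [verts_stdSphere hA], (stdSphere_image hf).symm⟩

lemma iso_sjoin_stdSphere [Nonempty W] {A₁ A₂ : Finset V} {B₁ B₂ : Finset W}
    (hA : Disjoint A₁ A₂) (hB : Disjoint B₁ B₂) (h₁ : 2 ≤ A₁.card) (h₂ : 2 ≤ A₂.card)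
    (hc₁ : A₁.card = B₁.card) (hc₂ : A₂.card = B₂.card) :
    Iso (sjoin (stdSphere A₁) (stdSphere A₂)) (sjoin (stdSphere B₁) (stdSphere B₂)) := by
  obtain ⟨f₁, hf₁, rfl⟩ := exists_injOn_image_eq hc₁
  obtain ⟨f₂, hf₂, rfl⟩ := exists_injOn_image_eq hc₂
  let f := A₁.piecewise f₁ f₂
  have e₁ : Set.EqOn f f₁ A₁ := fun v hv => piecewise_eq_of_mem _ _ _ hv
  have e₂ : Set.EqOn f f₂ A₂ := fun v hv =>
    piecewise_eq_of_notMem _ _ _ (disjoint_right.1 hA hv)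
  have hf : Set.InjOn f ↑(A₁ ∪ A₂) := by
    rw [coe_union, Set.injOn_union (disjoint_coe.2 hA)]
    refine ⟨e₁.injOn_iff.2 hf₁, e₂.injOn_iff.2 hf₂, fun x hx y hy hxy => ?_⟩
    rw [e₁ hx, e₂ hy] at hxy
    exact disjoint_left.1 hB (mem_image_of_mem f₁ hx)
      (hxy ▸ mem_image_of_mem f₂ hy)
  refine ⟨f, by rwa [verts_sjoin, verts_stdSphere h₁, verts_stdSphere h₂], ?_⟩
  rw [sjoin_image, stdSphere_image (hf.mono (by simp)), stdSphere_image (hf.mono (by simp)),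
    image_congr e₁, image_congr e₂]

lemma realizes_of_iso {K : Finset (Finset V)} {L : Finset (Finset W)} {G : GComplex}
    (hKL : Iso K L) (hL : Realizes G L) : Realizes G K := by
  obtain ⟨f, hf, rfl⟩ := hKL
  obtain ⟨g, hg, hG⟩ := hL
  refine ⟨g ∘ f, fun a ha b hb hab => hf ha hb (hg ?_ ?_ hab), ?_⟩
  · simpa [verts_image] using mem_image_of_mem f ha
  · simpa [verts_image] using mem_image_of_mem f hb
  · rw [hG, image_image]
    exact image_congr fun _ _ => image_image

lemma subdivides_refl (G : GComplex) : Subdivides G G :=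
  ⟨rfl, fun s hs => ⟨s, hs, subset_rfl⟩⟩

lemma combEquiv_of_iso_of_subdivides {K : Finset (Finset V)} {L : Finset (Finset W)}
    {M : Finset (Finset U)} {G G' : GComplex} (hKM : Iso K M) (hM : Realizes G M)
    (hL : Realizes G' L) (hGG' : Subdivides G G') : CombEquiv K L :=
  ⟨G, G, G', G, realizes_of_iso hKM hM, hL, subdivides_refl G, hGG',
    ⟨id, Set.injOn_id _,
      ((image_congr fun _ _ => image_id).trans image_id).symm⟩⟩

end Isomorphisms

lemma sum_ite_eq_add_sum_erase {M : Type*} [AddCommMonoid M] (s : Finset V) (a : V) {b : M}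
    (g : V → M) (hb : a ∉ s → b = 0) :
    ∑ i ∈ s, (if i = a then b else g i) = b + ∑ i ∈ s.erase a, g i := by
  by_cases ha : a ∈ s
  · rw [← add_sum_erase s _ ha, if_pos rfl]
    exact congrArg _ (sum_congr rfl fun i hi => if_neg (ne_of_mem_erase hi))
  · rw [hb ha, zero_add, erase_eq_of_notMem ha]
    exact sum_congr rfl fun i hi => if_neg (ne_of_mem_of_not_mem hi ha)

section StdSimplex

def unitVec (i : ℕ) : ℕ → ℝ := Pi.single i 1

def stdSimplexOn (S : Finset ℕ) : Set (ℕ → ℝ) :=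
  {x | (∀ i, 0 ≤ x i) ∧ (∀ i ∉ S, x i = 0) ∧ ∑ i ∈ S, x i = 1}

lemma unitVec_apply (i j : ℕ) : unitVec i j = if j = i then 1 else 0 :=
  Pi.single_apply i 1 j

lemma unitVec_injective : Function.Injective unitVec := fun i j h => by
  simpa [unitVec_apply] using congrFun h i

lemma sum_smul_unitVec_apply (S : Finset ℕ) (a : ℕ → ℝ) (j : ℕ) :
    (∑ i ∈ S, a i • unitVec i) j = if j ∈ S then a j else 0 := by
  simp [Finset.sum_apply, unitVec_apply]

lemma convex_stdSimplexOn (S : Finset ℕ) : Convex ℝ (stdSimplexOn S) := by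
  intro x ⟨hx0, hxS, hx1⟩ y ⟨hy0, hyS, hy1⟩ a b ha hb hab
  refine ⟨fun i => ?_, fun i hi => ?_, ?_⟩
  · simp only [Pi.add_apply, Pi.smul_apply, smul_eq_mul]
    exact add_nonneg (mul_nonneg ha (hx0 i)) (mul_nonneg hb (hy0 i))
  · simp [hxS i hi, hyS i hi]
  · simp [sum_add_distrib, ← mul_sum, hx1, hy1, hab]

lemma unitVec_mem_stdSimplexOn {S : Finset ℕ} {i : ℕ} (hi : i ∈ S) :
    unitVec i ∈ stdSimplexOn S := by
  refine ⟨fun j => ?_, fun j hj => ?_, ?_⟩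
  · rw [unitVec_apply]; split_ifs <;> norm_num
  · rw [unitVec_apply, if_neg (ne_of_mem_of_not_mem hi hj).symm]
  · simp [unitVec_apply, hi]

lemma convexHull_unitVec_image (S : Finset ℕ) :
    convexHull ℝ (S.image unitVec : Set (ℕ → ℝ)) = stdSimplexOn S := by
  refine (convexHull_min ?_ (convex_stdSimplexOn S)).antisymm fun x ⟨hx0, hxS, hx1⟩ => ?_
  · simp only [coe_image, Set.image_subset_iff]
    exact fun i hi => unitVec_mem_stdSimplexOn hi
  have hx : x = ∑ i ∈ S, x i • unitVec i := by
    funext j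
    rw [sum_smul_unitVec_apply]
    split_ifs with hj
    · rfl
    · exact hxS j hj
  rw [hx]
  exact (convex_convexHull ℝ _).sum_mem (fun i _ => hx0 i) hx1
    fun i hi => subset_convexHull ℝ _ (mem_image_of_mem unitVec hi)

lemma stdSimplexOn_mono {S S' : Finset ℕ} (h : S ⊆ S') : stdSimplexOn S ⊆ stdSimplexOn S' :=
  fun _ ⟨hx0, hxS, hx1⟩ => ⟨hx0, fun i hi => hxS i fun h' => hi (h h'),
    by rwa [← sum_subset h fun i _ hi => hxS i hi]⟩

lemma stdSimplexOn_inter (S S' : Finset ℕ) :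
    stdSimplexOn S ∩ stdSimplexOn S' = stdSimplexOn (S ∩ S') := by
  ext x
  constructor
  · rintro ⟨⟨hx0, hxS, hx1⟩, -, hxS', -⟩
    have hzero : ∀ i ∉ S ∩ S', x i = 0 := fun i hi => by
      by_cases h : i ∈ S
      · exact hxS' i fun h' => hi (mem_inter.2 ⟨h, h'⟩)
      · exact hxS i h
    refine ⟨hx0, hzero, ?_⟩
    rwa [sum_subset inter_subset_left fun i _ hi => hzero i hi]
  · exact fun hx => ⟨stdSimplexOn_mono inter_subset_left hx,
      stdSimplexOn_mono inter_subset_right hx⟩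

lemma linearIndepOn_unitVec_image (S : Finset ℕ) :
    LinearIndepOn ℝ id (↑(S.image unitVec) : Set (ℕ → ℝ)) := by
  rw [coe_image]
  exact ((Pi.linearIndependent_single_one ℕ ℝ).linearIndepOn _).id_image

end StdSimplex

structure IsLinearRealization (K : Finset (Finset V)) (f : V → ℕ → ℝ) : Prop where
  isComplex : IsComplex K
  injective : Function.Injective f
  affineIndependent : ∀ T ∈ K,
    AffineIndependent ℝ (fun x : {y : ℕ → ℝ // y ∈ T.image f} => (x : ℕ → ℝ))
  convexHull_inter : ∀ T ∈ K, ∀ T' ∈ K,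
    convexHull ℝ (T.image f : Set (ℕ → ℝ)) ∩ convexHull ℝ (T'.image f : Set (ℕ → ℝ)) =
      convexHull ℝ ((T ∩ T').image f : Set (ℕ → ℝ))

namespace IsLinearRealization

variable {K : Finset (Finset V)} {f : V → ℕ → ℝ}

def toGComplex (h : IsLinearRealization K f) : GComplex where
  faces := K.image (image f)
  nonempty := h.isComplex.1.image _
  empty_not_mem := by
    simp only [mem_image, image_eq_empty, not_exists, not_and]
    rintro T hT rfl
    exact h.isComplex.2.1 hT
  down_closed := by
    intro s hs t hts ht
    obtain ⟨T, hT, rfl⟩ := mem_image.1 hs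
    obtain ⟨T', hT'T, rfl⟩ := subset_image_iff.1 hts
    exact mem_image_of_mem _ (h.isComplex.2.2 T hT T' hT'T (image_nonempty.1 ht))
  indep := by
    intro s hs
    obtain ⟨T, hT, rfl⟩ := mem_image.1 hs
    exact h.affineIndependent T hT
  glue := by
    intro s hs s' hs'
    obtain ⟨T, hT, rfl⟩ := mem_image.1 hs
    obtain ⟨T', hT', rfl⟩ := mem_image.1 hs'
    rw [← image_inter _ _ h.injective]
    exact h.convexHull_inter T hT T' hT'

lemma realizes (h : IsLinearRealization K f) : Realizes h.toGComplex K :=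
  ⟨f, h.injective.injOn, rfl⟩

lemma carrier_toGComplex (h : IsLinearRealization K f) :
    h.toGComplex.carrier = ⋃ T ∈ K, convexHull ℝ (T.image f : Set (ℕ → ℝ)) := by
  simp [GComplex.carrier, toGComplex]

lemma subdivides {L : Finset (Finset W)} {g : W → ℕ → ℝ} (hK : IsLinearRealization K f)
    (hL : IsLinearRealization L g)
    (hcover : ∀ S ∈ L, convexHull ℝ (S.image g : Set (ℕ → ℝ)) ⊆
      ⋃ T ∈ K, convexHull ℝ (T.image f : Set (ℕ → ℝ)))
    (hsub : ∀ T ∈ K, ∃ S ∈ L,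
      convexHull ℝ (T.image f : Set (ℕ → ℝ)) ⊆ convexHull ℝ (S.image g : Set (ℕ → ℝ))) :
    Subdivides hK.toGComplex hL.toGComplex := by
  refine ⟨?_, fun s hs => ?_⟩
  · rw [carrier_toGComplex, carrier_toGComplex]
    refine subset_antisymm (Set.iUnion₂_subset fun T hT => ?_) (Set.iUnion₂_subset hcover)
    obtain ⟨S, hS, hTS⟩ := hsub T hT
    exact hTS.trans (Set.subset_biUnion_of_mem
      (u := fun S => convexHull ℝ (S.image g : Set (ℕ → ℝ))) hS)
  · obtain ⟨T, hT, rfl⟩ := mem_image.1 hs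
    obtain ⟨S, hS, hTS⟩ := hsub T hT
    exact ⟨_, mem_image_of_mem _ hS, hTS⟩

end IsLinearRealization

lemma isLinearRealization_stdSphere {n : ℕ} (hn : 2 ≤ n) :
    IsLinearRealization (stdSphere (range n)) unitVec where
  isComplex := isComplex_stdSphere (by simpa using hn)
  injective := unitVec_injective
  affineIndependent T _ := (linearIndepOn_unitVec_image T).linearIndependent.affineIndependent
  convexHull_inter T _ T' _ := by
    simp only [convexHull_unitVec_image, stdSimplexOn_inter]

section Stellar

variable {n : ℕ} {τ T T' : Finset ℕ}

def barycenter (τ : Finset ℕ) : ℕ → ℝ := fun j => if j ∈ τ then (τ.card : ℝ)⁻¹ else 0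

def stellarVertex (n : ℕ) (τ : Finset ℕ) (i : ℕ) : ℕ → ℝ :=
  if i = n then barycenter τ else unitVec i

/-- The stellar subdivision of the boundary of the simplex on `range n` at its face `τ`, with new
vertex `n`. -/
def stellarSphere (n : ℕ) (τ : Finset ℕ) : Finset (Finset ℕ) :=
  sjoin (stdSphere (insert n (range n \ τ))) (stdSphere τ)

/-- The simplex of `stellarSphere n τ` spanned by `T` (see `convexHull_stellarVertex_image`);
`c` is the barycentric coordinate of the new vertex divided by `|τ|`. -/
def stellarCell (n : ℕ) (τ T : Finset ℕ) : Set (ℕ → ℝ) :=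
  stdSimplexOn (τ ∪ T.erase n) ∩
    {x | ∃ c, (n ∉ T → c = 0) ∧ (∀ j ∈ τ \ T, x j = c) ∧ ∀ i ∈ τ, c ≤ x i}

lemma barycenter_mem_stdSimplexOn {S : Finset ℕ} (hτ : τ.Nonempty) (hτS : τ ⊆ S) :
    barycenter τ ∈ stdSimplexOn S := by
  refine ⟨fun j => ?_, fun j hj => if_neg fun h => hj (hτS h), ?_⟩
  · unfold barycenter; split_ifs <;> positivity
  · rw [← sum_subset (f := barycenter τ) hτS fun j _ hj => if_neg hj]
    simp [barycenter, hτ.card_pos.ne']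

lemma barycenter_ne_unitVec (hτ : 2 ≤ τ.card) (i : ℕ) : barycenter τ ≠ unitVec i := by
  intro h
  have := congrFun h i
  simp only [barycenter, unitVec_apply] at this
  split_ifs at this
  · rw [inv_eq_one] at this
    exact absurd (Nat.cast_eq_one.1 this) (by omega)
  · exact zero_ne_one this

lemma stellarVertex_injective (hτ : 2 ≤ τ.card) : Function.Injective (stellarVertex n τ) := by
  intro i j h
  unfold stellarVertex at h
  split_ifs at h with hi hj hj
  · exact hi.trans hj.symm
  · exact absurd h (barycenter_ne_unitVec hτ j)
  · exact absurd h.symm (barycenter_ne_unitVec hτ i)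
  · exact unitVec_injective h

lemma linearIndepOn_stellarVertex_image (hT : ¬τ ⊆ T) :
    LinearIndepOn ℝ id (T.image (stellarVertex n τ) : Set (ℕ → ℝ)) := by
  have hR : (T.erase n).image (stellarVertex n τ) = (T.erase n).image unitVec :=
    image_congr fun i hi => if_neg (ne_of_mem_erase hi)
  by_cases hn : n ∈ T
  · obtain ⟨j₀, hj₀τ, hj₀T⟩ := not_subset.1 hT
    rw [← insert_erase hn, image_insert, hR, coe_insert]
    have hspan : Submodule.span ℝ ((T.erase n).image unitVec : Set (ℕ → ℝ)) ≤
        LinearMap.ker (LinearMap.proj j₀) := by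
      refine Submodule.span_le.2 fun v hv => ?_
      obtain ⟨i, hi, rfl⟩ := mem_image.1 hv
      simp [unitVec_apply, (ne_of_mem_of_not_mem (mem_of_mem_erase hi) hj₀T).symm]
    refine linearIndepOn_id_insert_iff.2 ⟨linearIndepOn_unitVec_image _, fun h => ?_⟩
    have := hspan h
    rw [stellarVertex, if_pos rfl, LinearMap.mem_ker, LinearMap.proj_apply, barycenter,
      if_pos hj₀τ] at this
    exact (inv_ne_zero (Nat.cast_ne_zero.2 (card_ne_zero_of_mem hj₀τ)) this).elim
  · rw [← erase_eq_of_notMem hn, hR]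
    exact linearIndepOn_unitVec_image _

lemma convex_stellarCell (n : ℕ) (τ T : Finset ℕ) : Convex ℝ (stellarCell n τ T) := by
  refine (convex_stdSimplexOn _).inter ?_
  rintro x ⟨c, hc0, hcT, hcmin⟩ y ⟨c', hc0', hcT', hcmin'⟩ a b ha hb hab
  refine ⟨a * c + b * c', fun h => by simp [hc0 h, hc0' h],
    fun j hj => by simp [hcT j hj, hcT' j hj], fun i hi => ?_⟩
  simp only [Pi.add_apply, Pi.smul_apply, smul_eq_mul]
  exact add_le_add (mul_le_mul_of_nonneg_left (hcmin i hi) ha)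
    (mul_le_mul_of_nonneg_left (hcmin' i hi) hb)

lemma stellarVertex_mem_stellarCell (hT : ¬τ ⊆ T) {i : ℕ} (hi : i ∈ T) :
    stellarVertex n τ i ∈ stellarCell n τ T := by
  obtain ⟨j₀, hj₀τ, -⟩ := not_subset.1 hT
  by_cases hin : i = n
  · subst hin
    rw [stellarVertex, if_pos rfl]
    exact ⟨barycenter_mem_stdSimplexOn ⟨j₀, hj₀τ⟩ subset_union_left, (τ.card : ℝ)⁻¹,
      fun h => absurd hi h, fun j hj => if_pos (mem_sdiff.1 hj).1,
      fun j hj => (if_pos hj).ge⟩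
  · rw [stellarVertex, if_neg hin]
    refine ⟨unitVec_mem_stdSimplexOn (mem_union_right _ (mem_erase.2 ⟨hin, hi⟩)),
      0, fun _ => rfl, fun j hj => ?_, fun j _ => ?_⟩
    · rw [unitVec_apply, if_neg]
      rintro rfl
      exact (mem_sdiff.1 hj).2 hi
    · rw [unitVec_apply]
      split_ifs <;> norm_num

/-- The barycentric coordinates of a point `x` of `stellarCell n τ T` with respect to the vertices
`stellarVertex n τ i`, `i ∈ T`. -/
def stellarWeight (n : ℕ) (τ : Finset ℕ) (x : ℕ → ℝ) (c : ℝ) (i : ℕ) : ℝ :=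
  if i = n then τ.card * c else x i - if i ∈ τ then c else 0

section StellarWeight

variable {x : ℕ → ℝ} {c : ℝ}

lemma sum_stellarWeight (hnτ : n ∉ τ) (hx : x ∈ stdSimplexOn (τ ∪ T.erase n))
    (hc0 : n ∉ T → c = 0) (hcT : ∀ j ∈ τ \ T, x j = c) :
    ∑ i ∈ T, stellarWeight n τ x c i = 1 := by
  have hsplit := sum_sdiff (f := x) (subset_union_right (s₁ := τ) (s₂ := T.erase n))
  rw [union_sdiff_right, sum_congr rfl fun j hj => hcT j ?_, sum_const,
    nsmul_eq_mul, hx.2.2] at hsplit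
  · have hcard := congrArg (Nat.cast (R := ℝ)) (card_sdiff_add_card_inter τ (T.erase n))
    push_cast at hcard
    simp only [stellarWeight]
    rw [sum_ite_eq_add_sum_erase T n _ fun h => by rw [hc0 h, mul_zero],
      sum_sub_distrib, sum_ite_mem, sum_const, nsmul_eq_mul,
      inter_comm]
    linear_combination hsplit - c * hcard
  · obtain ⟨hjτ, hjR⟩ := mem_sdiff.1 hj
    exact mem_sdiff.2
      ⟨hjτ, fun h => hjR (mem_erase.2 ⟨ne_of_mem_of_not_mem hjτ hnτ, h⟩)⟩

lemma sum_stellarWeight_smul (hnτ : n ∉ τ) (hτ : τ.Nonempty)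
    (hx : x ∈ stdSimplexOn (τ ∪ T.erase n)) (hc0 : n ∉ T → c = 0)
    (hcT : ∀ j ∈ τ \ T, x j = c) :
    ∑ i ∈ T, stellarWeight n τ x c i • stellarVertex n τ i = x := by
  rw [sum_congr rfl fun i _ => show stellarWeight n τ x c i • stellarVertex n τ i =
      if i = n then ((τ.card : ℝ) * c) • barycenter τ
      else (x i - if i ∈ τ then c else 0) • unitVec i by
        unfold stellarWeight stellarVertex; split_ifs <;> rfl,
    sum_ite_eq_add_sum_erase T n _ fun h => by rw [hc0 h, mul_zero, zero_smul]]
  funext j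
  rw [Pi.add_apply, sum_smul_unitVec_apply, Pi.smul_apply, barycenter, smul_eq_mul]
  have hcτ : (τ.card : ℝ) * c * (τ.card : ℝ)⁻¹ = c := by
    field_simp [Nat.cast_ne_zero.2 hτ.card_pos.ne']
  by_cases hjτ : j ∈ τ <;> by_cases hjR : j ∈ T.erase n
  · simp [hjτ, hjR, hcτ]
  · have hjT : j ∉ T := fun h => hjR (mem_erase.2 ⟨ne_of_mem_of_not_mem hjτ hnτ, h⟩)
    simp [hjτ, hjR, hcτ, hcT j (mem_sdiff.2 ⟨hjτ, hjT⟩)]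
  · simp [hjτ, hjR]
  · simp [hjτ, hjR, hx.2.1 j (by simp [hjτ, hjR])]

end StellarWeight

lemma stellarCell_subset_convexHull (hnτ : n ∉ τ) (hT : ¬τ ⊆ T) :
    stellarCell n τ T ⊆ convexHull ℝ (T.image (stellarVertex n τ) : Set (ℕ → ℝ)) := by
  rintro x ⟨hx, c, hc0, hcT, hcmin⟩
  obtain ⟨j₀, hj₀τ, hj₀T⟩ := not_subset.1 hT
  have hc : 0 ≤ c := hcT j₀ (mem_sdiff.2 ⟨hj₀τ, hj₀T⟩) ▸ hx.1 j₀
  have hw0 : ∀ i ∈ T, 0 ≤ stellarWeight n τ x c i := fun i _ => by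
    unfold stellarWeight
    split_ifs with hin hiτ
    · positivity
    · linarith [hcmin i hiτ]
    · linarith [hx.1 i]
  rw [← sum_stellarWeight_smul hnτ ⟨j₀, hj₀τ⟩ hx hc0 hcT]
  exact (convex_convexHull ℝ _).sum_mem hw0 (sum_stellarWeight hnτ hx hc0 hcT)
    fun i hi => subset_convexHull ℝ _ (mem_image_of_mem _ hi)

lemma convexHull_stellarVertex_image (hnτ : n ∉ τ) (hT : ¬τ ⊆ T) :
    convexHull ℝ (T.image (stellarVertex n τ) : Set (ℕ → ℝ)) = stellarCell n τ T := by
  refine (convexHull_min ?_ (convex_stellarCell n τ T)).antisymm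
    (stellarCell_subset_convexHull hnτ hT)
  simp only [coe_image, Set.image_subset_iff]
  exact fun i hi => stellarVertex_mem_stellarCell hT hi

lemma stellarCell_mono (h : T ⊆ T') : stellarCell n τ T ⊆ stellarCell n τ T' :=
  fun _ ⟨hx, c, hc0, hcT, hcmin⟩ =>
    ⟨stdSimplexOn_mono (union_subset_union_right (erase_subset_erase n h)) hx,
      c, fun hn => hc0 fun hn' => hn (h hn'),
      fun j hj => hcT j (sdiff_subset_sdiff subset_rfl h hj), hcmin⟩

lemma stellarCell_inter (hT : ¬τ ⊆ T) (hT' : ¬τ ⊆ T') :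
    stellarCell n τ T ∩ stellarCell n τ T' = stellarCell n τ (T ∩ T') := by
  refine subset_antisymm ?_ fun x hx =>
    ⟨stellarCell_mono inter_subset_left hx, stellarCell_mono inter_subset_right hx⟩
  rintro x ⟨⟨hx, c, hc0, hcT, hcmin⟩, hx', c', hc0', hcT', hcmin'⟩
  have hcc' : c = c' := by
    obtain ⟨j, hjτ, hjT⟩ := not_subset.1 hT
    obtain ⟨j', hj'τ, hj'T'⟩ := not_subset.1 hT'
    have hj := hcT j (mem_sdiff.2 ⟨hjτ, hjT⟩)
    have hj' := hcT' j' (mem_sdiff.2 ⟨hj'τ, hj'T'⟩)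
    by_cases hjT' : j ∈ T'
    · by_cases hj'T : j' ∈ T
      · exact le_antisymm (hj' ▸ hcmin j' hj'τ) (hj ▸ hcmin' j hjτ)
      · exact (hcT j' (mem_sdiff.2 ⟨hj'τ, hj'T⟩)).symm.trans hj'
    · exact hj.symm.trans (hcT' j (mem_sdiff.2 ⟨hjτ, hjT'⟩))
  subst hcc'
  have hS : τ ∪ (T ∩ T').erase n = (τ ∪ T.erase n) ∩ (τ ∪ T'.erase n) := by
    ext
    simp only [mem_union, mem_erase, mem_inter]
    tauto
  refine ⟨hS ▸ stdSimplexOn_inter _ _ ▸ ⟨hx, hx'⟩, c, fun hn => ?_, fun j hj => ?_, hcmin⟩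
  · by_cases hnT : n ∈ T
    · exact hc0' fun h => hn (mem_inter.2 ⟨hnT, h⟩)
    · exact hc0 hnT
  · obtain ⟨hjτ, hjTT'⟩ := mem_sdiff.1 hj
    by_cases hjT : j ∈ T
    · exact hcT' j (mem_sdiff.2 ⟨hjτ, fun h => hjTT' (mem_inter.2 ⟨hjT, h⟩)⟩)
    · exact hcT j (mem_sdiff.2 ⟨hjτ, hjT⟩)

end Stellar

section StellarSphere

variable {n : ℕ} {τ : Finset ℕ}

lemma notMem_of_subset_range {S : Finset ℕ} (hS : S ⊆ range n) : n ∉ S :=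
  fun h => by simpa using hS h

lemma card_insert_range_sdiff (hτ : τ ⊆ range n) :
    (insert n (range n \ τ)).card = n - τ.card + 1 := by
  rw [card_insert_of_notMem (by simp), card_sdiff_of_subset hτ, card_range]

lemma disjoint_insert_range_sdiff (hτ : τ ⊆ range n) :
    Disjoint (insert n (range n \ τ)) τ :=
  disjoint_insert_left.2 ⟨notMem_of_subset_range hτ, sdiff_disjoint⟩

lemma mem_stellarSphere (hτ : τ ⊆ range n) (hτ0 : τ.Nonempty) {T : Finset ℕ} :
    T ∈ stellarSphere n τ ↔ T.Nonempty ∧ T ⊆ insert n (range n) ∧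
      ¬insert n (range n \ τ) ⊆ T ∧ ¬τ ⊆ T := by
  rw [stellarSphere, mem_sjoin_stdSphere (disjoint_insert_range_sdiff hτ)
    (insert_nonempty _ _) hτ0, insert_union, sdiff_union_of_subset hτ]

lemma isLinearRealization_stellarSphere (hτ : τ ⊆ range n) (h2 : 2 ≤ τ.card)
    (hlt : τ.card < n) : IsLinearRealization (stellarSphere n τ) (stellarVertex n τ) := by
  have hnτ := notMem_of_subset_range hτ
  have hT : ∀ T ∈ stellarSphere n τ, ¬τ ⊆ T := fun T hT =>
    ((mem_stellarSphere hτ (card_pos.1 (by omega))).1 hT).2.2.2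
  refine ⟨isComplex_sjoin_stdSphere (disjoint_insert_range_sdiff hτ)
      (by rw [card_insert_range_sdiff hτ]; omega) h2,
    stellarVertex_injective h2,
    fun T hT' => (linearIndepOn_stellarVertex_image (hT T hT')).linearIndependent.affineIndependent,
    fun T hT₁ T' hT₂ => ?_⟩
  rw [convexHull_stellarVertex_image hnτ (hT T hT₁), convexHull_stellarVertex_image hnτ (hT T' hT₂),
    convexHull_stellarVertex_image hnτ fun h => hT T hT₁ (h.trans inter_subset_left),
    stellarCell_inter (hT T hT₁) (hT T' hT₂)]

lemma exists_stdSphere_stellarCell_subset (hτ : τ ⊆ range n) (hτ0 : τ.Nonempty)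
    {T : Finset ℕ} (hT : T ∈ stellarSphere n τ) :
    ∃ S ∈ stdSphere (range n), stellarCell n τ T ⊆ stdSimplexOn S := by
  obtain ⟨hT0, hTn, hUT, hτT⟩ := (mem_stellarSphere hτ hτ0).1 hT
  have hTerase : T.erase n ⊆ range n := fun i hi => by
    simpa [ne_of_mem_erase hi] using hTn (mem_of_mem_erase hi)
  by_cases hn : n ∈ T
  · refine ⟨τ ∪ T.erase n, mem_stdSphere.2 ⟨hτ0.mono subset_union_left,
      union_subset hτ hTerase, fun h => hUT (insert_subset hn fun k hk => ?_)⟩,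
      Set.inter_subset_left⟩
    obtain ⟨hkn, hkτ⟩ := mem_sdiff.1 hk
    exact mem_of_mem_erase ((mem_union.1 (h hkn)).resolve_left hkτ)
  · rw [erase_eq_of_notMem hn] at hTerase
    refine ⟨T, mem_stdSphere.2 ⟨hT0, hTerase, fun h => hτT (hτ.trans h)⟩, ?_⟩
    rintro x ⟨⟨hx0, hxS, hx1⟩, c, hc0, hcT, -⟩
    rw [erase_eq_of_notMem hn] at hxS hx1
    have hzero : ∀ i ∉ T, x i = 0 := fun i hi => by
      by_cases h : i ∈ τ
      · exact (hcT i (mem_sdiff.2 ⟨h, hi⟩)).trans (hc0 hn)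
      · exact hxS i (by simp [h, hi])
    rw [← sum_subset subset_union_right fun i _ hi => hzero i hi] at hx1
    exact ⟨hx0, hzero, hx1⟩

lemma exists_mem_stellarCell (hτ : τ ⊆ range n) (hτ0 : τ.Nonempty) {S : Finset ℕ}
    (hS : S ∈ stdSphere (range n)) {x : ℕ → ℝ} (hx : x ∈ stdSimplexOn S) :
    ∃ T ∈ stellarSphere n τ, x ∈ stellarCell n τ T := by
  obtain ⟨hS0, hSn, hnS⟩ := mem_stdSphere.1 hS
  have hnS' := notMem_of_subset_range hSn
  by_cases hτS : τ ⊆ S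
  · -- replace the vertex `j₀` of `τ` at which `x` is smallest by the new vertex
    obtain ⟨j₀, hj₀, hmin⟩ := τ.exists_min_image x hτ0
    have hT : insert n (S.erase j₀) ∈ stellarSphere n τ := by
      refine (mem_stellarSphere hτ hτ0).2 ⟨insert_nonempty _ _,
        insert_subset_insert _ ((erase_subset _ _).trans hSn), fun h => hnS fun k hk => ?_,
        fun h => ?_⟩
      · by_cases hkτ : k ∈ τ
        · exact hτS hkτ
        · have := h (mem_insert_of_mem (mem_sdiff.2 ⟨hk, hkτ⟩))
          grind
      · have := h hj₀
        grind
    have hS' : τ ∪ (insert n (S.erase j₀)).erase n = S := by grind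
    refine ⟨_, hT, by rwa [hS'], x j₀, fun h => absurd (mem_insert_self _ _) h, fun j hj => ?_,
      hmin⟩
    rw [show j = j₀ by grind]
  · refine ⟨S, (mem_stellarSphere hτ hτ0).2 ⟨hS0, hSn.trans (subset_insert _ _),
      fun h => hnS' (h (mem_insert_self _ _)), hτS⟩, ?_, 0, fun _ => rfl,
      fun j hj => hx.2.1 j (mem_sdiff.1 hj).2, fun i _ => hx.1 i⟩
    rw [erase_eq_of_notMem hnS']
    exact stdSimplexOn_mono subset_union_right hx

lemma subdivides_stellarSphere (hτ : τ ⊆ range n) (h2 : 2 ≤ τ.card) (hlt : τ.card < n) :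
    Subdivides (isLinearRealization_stellarSphere hτ h2 hlt).toGComplex
      (isLinearRealization_stdSphere (n := n) (by omega)).toGComplex := by
  have hnτ := notMem_of_subset_range hτ
  have hτ0 : τ.Nonempty := card_pos.1 (by omega)
  have hcell : ∀ T ∈ stellarSphere n τ,
      convexHull ℝ (T.image (stellarVertex n τ) : Set (ℕ → ℝ)) = stellarCell n τ T :=
    fun T hT => convexHull_stellarVertex_image hnτ ((mem_stellarSphere hτ hτ0).1 hT).2.2.2
  refine IsLinearRealization.subdivides _ _ (fun S hS x hx => ?_) fun T hT => ?_
  · rw [convexHull_unitVec_image] at hx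
    obtain ⟨T, hT, hxT⟩ := exists_mem_stellarCell hτ hτ0 hS hx
    exact Set.mem_biUnion hT (hcell T hT ▸ hxT)
  · obtain ⟨S, hS, hTS⟩ := exists_stdSphere_stellarCell_subset hτ hτ0 hT
    exact ⟨S, hS, by rwa [hcell T hT, convexHull_unitVec_image]⟩

end StellarSphere

section CombinatorialSpheres

variable {d : ℕ}

lemma isCombSphere_stdSphere {A : Finset V} (hA : A.card = d + 2) :
    IsCombSphere d (stdSphere A) :=
  have hstd := isLinearRealization_stdSphere (n := d + 2) (by omega)
  ⟨range (d + 2), card_range _,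
    combEquiv_of_iso_of_subdivides (iso_stdSphere (by omega) (by simp [hA])) hstd.realizes
      hstd.realizes (subdivides_refl _)⟩

lemma isCombSphere_sjoin_stdSphere {A B : Finset V} (hAB : Disjoint A B) (hA : 2 ≤ A.card)
    (hB : 2 ≤ B.card) (hcard : A.card + B.card = d + 3) :
    IsCombSphere d (sjoin (stdSphere A) (stdSphere B)) := by
  obtain ⟨τ, hτ, hτB⟩ := exists_subset_card_eq (s := range (d + 2)) (n := B.card)
    (by rw [card_range]; omega)
  have hiso := iso_sjoin_stdSphere hAB (disjoint_insert_range_sdiff hτ) hA hB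
    (by rw [card_insert_range_sdiff hτ]; omega) hτB.symm
  exact ⟨range (d + 2), card_range _,
    combEquiv_of_iso_of_subdivides hiso (isLinearRealization_stellarSphere hτ (by omega)
      (by omega)).realizes (isLinearRealization_stdSphere (by omega)).realizes
      (subdivides_stellarSphere hτ (by omega) (by omega))⟩

end CombinatorialSpheres

section Graphs

/-- `htrans` says that non-adjacency is transitive, i.e. that the graph is complete multipartite. -/
lemma exists_dominating_or_complete_bipartite {S : Finset V} {r : V → V → Prop}
    (hsymm : ∀ a b, r a b → r b a)
    (htrans : ∀ a ∈ S, ∀ b ∈ S, ∀ c ∈ S, a ≠ b → a ≠ c → b ≠ c → r a b → r a c ∨ r b c)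
    {a₀ b₀ : V} (ha₀ : a₀ ∈ S) (hb₀ : b₀ ∈ S) (hab₀ : a₀ ≠ b₀) (hr : r a₀ b₀) :
    (∃ v ∈ S, ∀ u ∈ S, u ≠ v → r v u) ∨
      ∃ C D : Finset V, Disjoint C D ∧ C ∪ D = S ∧ 2 ≤ C.card ∧ 2 ≤ D.card ∧
        ∀ x ∈ C, ∀ y ∈ D, r x y := by
  refine or_iff_not_imp_left.2 fun hdom => ?_
  push Not at hdom
  let p : V → Prop := fun x => x = a₀ ∨ ¬r a₀ x
  have hD : ∀ {y}, y ∈ S.filter (¬p ·) ↔ y ∈ S ∧ y ≠ a₀ ∧ r a₀ y := by simp [p]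
  have hcross : ∀ x ∈ S.filter p, ∀ y ∈ S.filter (¬p ·), r x y := by
    intro x hx y hy
    obtain ⟨hyS, hya, hy⟩ := hD.1 hy
    obtain ⟨hxS, hx⟩ := mem_filter.1 hx
    by_cases hxa : x = a₀
    · exact hxa ▸ hy
    have hxr : ¬r a₀ x := hx.resolve_left hxa
    have hxy : y ≠ x := fun h => hxr (h ▸ hy)
    exact hsymm _ _
      ((htrans a₀ ha₀ y hyS x hxS (Ne.symm hya) (Ne.symm hxa) hxy hy).resolve_left hxr)
  refine ⟨_, _, disjoint_filter_filter_not S S p, filter_union_filter_not_eq p S,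
    ?_, ?_, hcross⟩
  · obtain ⟨w, hwS, hwa, hw⟩ := hdom a₀ ha₀
    exact one_lt_card.2 ⟨a₀, mem_filter.2 ⟨ha₀, Or.inl rfl⟩, w,
      mem_filter.2 ⟨hwS, Or.inr hw⟩, hwa.symm⟩
  · obtain ⟨w, hwS, hwb, hw⟩ := hdom b₀ hb₀
    have hb₀D : b₀ ∈ S.filter (¬p ·) := hD.2 ⟨hb₀, hab₀.symm, hr⟩
    have hwD : w ∈ S.filter (¬p ·) := by
      by_contra hwD
      exact hw (hsymm _ _ (hcross w (mem_filter.2 ⟨hwS, by simpa [hwS] using hwD⟩) b₀ hb₀D))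
    exact one_lt_card.2 ⟨b₀, hb₀D, w, hwD, hwb.symm⟩

end Graphs

section FewVertices

variable {Y : Finset (Finset V)} {d : ℕ}

lemma stdSphere_subset {A : Finset V} (hY : IsComplex Y) (h : ∀ u ∈ A, A.erase u ∈ Y) :
    stdSphere A ⊆ Y := by
  intro s hs
  obtain ⟨hs0, hsA, hAs⟩ := mem_stdSphere.1 hs
  obtain ⟨u, huA, hus⟩ := not_subset.1 hAs
  exact hY.2.2 _ (h u huA) s (subset_erase.2 ⟨hsA, hus⟩) hs0

lemma sjoin_stdSphere_subset {A B : Finset V} (hY : IsComplex Y) (hAB : Disjoint A B)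
    (hA : A.Nonempty) (hB : B.Nonempty) (h : ∀ x ∈ A, ∀ y ∈ B, (A ∪ B) \ {x, y} ∈ Y) :
    sjoin (stdSphere A) (stdSphere B) ⊆ Y := by
  intro s hs
  obtain ⟨hs0, hsAB, hAs, hBs⟩ := (mem_sjoin_stdSphere hAB hA hB).1 hs
  obtain ⟨x, hxA, hxs⟩ := not_subset.1 hAs
  obtain ⟨y, hyB, hys⟩ := not_subset.1 hBs
  refine hY.2.2 _ (h x hxA y hyB) s (fun z hz => ?_) hs0
  simp only [mem_sdiff, mem_insert, mem_singleton]
  exact ⟨hsAB hz, by rintro (rfl | rfl) <;> contradiction⟩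

lemma exists_mem_facets_superset {s : Finset V} (hs : s ∈ Y) : ∃ F ∈ facets Y, s ⊆ F := by
  obtain ⟨F, hF, hmax⟩ := exists_max_image (Y.filter (s ⊆ ·)) card
    ⟨s, mem_filter.2 ⟨hs, subset_rfl⟩⟩
  obtain ⟨hFY, hsF⟩ := mem_filter.1 hF
  refine ⟨F, mem_filter.2 ⟨hFY, fun t ht hFt => ?_⟩, hsF⟩
  exact (eq_of_subset_of_card_le hFt (hmax t (mem_filter.2 ⟨ht, hsF.trans hFt⟩))).symm

lemma exists_mem_card_eq (hY : IsComplex Y) (hpure : IsPure d Y) : ∃ F ∈ Y, F.card = d + 1 := by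
  obtain ⟨s, hs⟩ := hY.1
  obtain ⟨F, hF, -⟩ := exists_mem_facets_superset hs
  exact ⟨F, (mem_filter.1 hF).1, hpure F hF⟩

lemma exists_insert_erase_mem (hY : IsComplex Y) (hdeg : ∀ s ∈ Y, s.card = d → 2 ≤ degOf Y d s)
    (hd : 0 < d) {F : Finset V} (hF : F ∈ Y) (hFc : F.card = d + 1) {x : V} (hx : x ∈ F) :
    ∃ y ∈ verts Y, y ∉ F ∧ insert y (F.erase x) ∈ Y := by
  have hcard : (F.erase x).card = d := by rw [card_erase_of_mem hx, hFc]; rfl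
  have hs : F.erase x ∈ Y :=
    hY.2.2 F hF _ (erase_subset x F) (card_pos.1 (by omega))
  obtain ⟨t, ht, htF⟩ := exists_mem_ne (hdeg _ hs hcard) F
  obtain ⟨htY, hst, htc⟩ := mem_filter.1 ht
  obtain ⟨y, hy, rfl⟩ := exists_eq_insert_iff.2 ⟨hst, by omega⟩
  refine ⟨y, subset_verts htY (mem_insert_self _ _), fun hyF => htF ?_, htY⟩
  rw [show y = x by grind, insert_erase hx]

lemma add_two_le_card_verts (hY : IsComplex Y) (hpure : IsPure d Y)
    (hdeg : ∀ s ∈ Y, s.card = d → 2 ≤ degOf Y d s) (hd : 0 < d) : d + 2 ≤ (verts Y).card := by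
  obtain ⟨F, hF, hFc⟩ := exists_mem_card_eq hY hpure
  obtain ⟨x, hx⟩ := card_pos.1 (by omega : 0 < F.card)
  obtain ⟨y, hyV, hyF, -⟩ := exists_insert_erase_mem hY hdeg hd hF hFc hx
  calc d + 2 = (insert y F).card := by rw [card_insert_of_notMem hyF, hFc]
    _ ≤ (verts Y).card := card_le_card (insert_subset hyV (subset_verts hF))

lemma stdSphere_verts_subset_of_card_verts_eq (hY : IsComplex Y) (hpure : IsPure d Y)
    (hdeg : ∀ s ∈ Y, s.card = d → 2 ≤ degOf Y d s) (hd : 0 < d)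
    (hcard : (verts Y).card = d + 2) : stdSphere (verts Y) ⊆ Y := by
  obtain ⟨F, hF, hFc⟩ := exists_mem_card_eq hY hpure
  obtain ⟨v, hv⟩ := card_eq_one.1 (by
    rw [card_sdiff_of_subset (subset_verts hF)]; omega : (verts Y \ F).card = 1)
  have hFV := subset_verts hF
  have hmem : ∀ w ∈ verts Y, w ∉ F ↔ w = v := fun w hw => by
    rw [← mem_singleton, ← hv, mem_sdiff]
    tauto
  have hFv : F = (verts Y).erase v := by grind
  refine stdSphere_subset hY fun u hu => ?_
  by_cases huv : u = v
  · rwa [huv, ← hFv]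
  · obtain ⟨y, hyV, hyF, hy⟩ := exists_insert_erase_mem hY hdeg hd hF hFc (x := u) (by grind)
    convert hy using 1
    grind

lemma sdiff_pair_mem_or_sdiff_pair_mem (hY : IsComplex Y)
    (hdeg : ∀ s ∈ Y, s.card = d → 2 ≤ degOf Y d s) (hd : 0 < d)
    (hcard : (verts Y).card = d + 3) {a b c : V} (ha : a ∈ verts Y) (hb : b ∈ verts Y)
    (hc : c ∈ verts Y) (hab : a ≠ b) (hac : a ≠ c) (hbc : b ≠ c) (h : verts Y \ {a, b} ∈ Y) :
    verts Y \ {a, c} ∈ Y ∨ verts Y \ {b, c} ∈ Y := by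
  have hFc : (verts Y \ {a, b}).card = d + 1 := by
    rw [card_sdiff_of_subset (insert_subset ha (singleton_subset_iff.2 hb)),
      card_pair hab]
    omega
  obtain ⟨y, hyV, hyF, hy⟩ :=
    exists_insert_erase_mem hY hdeg hd h hFc (x := c) (by simp [hc, hac.symm, hbc.symm])
  obtain rfl | rfl : y = a ∨ y = b := by
    simp only [mem_sdiff, hyV, true_and, not_not, mem_insert, mem_singleton] at hyF
    exact hyF
  · exact Or.inr (by convert hy using 1; grind)
  · exact Or.inl (by convert hy using 1; grind)

lemma stdSphere_or_sjoin_subset_of_card_verts_eq (hY : IsComplex Y) (hpure : IsPure d Y)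
    (hdeg : ∀ s ∈ Y, s.card = d → 2 ≤ degOf Y d s) (hd : 0 < d)
    (hcard : (verts Y).card = d + 3) :
    (∃ W ⊆ verts Y, W.card = d + 2 ∧ stdSphere W ⊆ Y) ∨
      ∃ V₁ V₂ : Finset V, Disjoint V₁ V₂ ∧ V₁ ∪ V₂ = verts Y ∧ 2 ≤ V₁.card ∧ 2 ≤ V₂.card ∧
        sjoin (stdSphere V₁) (stdSphere V₂) ⊆ Y := by
  obtain ⟨F, hF, hFc⟩ := exists_mem_card_eq hY hpure
  have hFV := subset_verts hF
  obtain ⟨a₀, b₀, hab, hpair⟩ := card_eq_two.1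
    (by rw [card_sdiff_of_subset hFV]; omega : (verts Y \ F).card = 2)
  have hpairV : {a₀, b₀} ⊆ verts Y := hpair ▸ sdiff_subset
  have hF' : verts Y \ {a₀, b₀} ∈ Y := by rwa [← hpair, Finset.sdiff_sdiff_eq_self hFV]
  rcases exists_dominating_or_complete_bipartite (r := fun a b => verts Y \ {a, b} ∈ Y)
      (fun a b h => by rwa [pair_comm])
      (fun a ha b hb c hc => sdiff_pair_mem_or_sdiff_pair_mem hY hdeg hd hcard ha hb hc)
      (hpairV (by simp)) (hpairV (by simp)) hab hF' with
    ⟨v, hv, hdom⟩ | ⟨C, D, hCD, hCDV, hC, hD, hcross⟩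
  · refine Or.inl ⟨(verts Y).erase v, erase_subset _ _,
      by rw [card_erase_of_mem hv, hcard]; rfl, stdSphere_subset hY fun u hu => ?_⟩
    convert hdom u (mem_of_mem_erase hu) (ne_of_mem_erase hu) using 1
    grind
  · exact Or.inr ⟨C, D, hCD, hCDV, hC, hD, sjoin_stdSphere_subset hY hCD
      (card_pos.1 (by omega)) (card_pos.1 (by omega))
      fun x hx y hy => hCDV ▸ hcross x hx y hy⟩

end FewVertices

/-- a pure 4-dimensional simplicial complex on at most 7 vertices
in which every 3-face lies in at least two facets contains a combinatorial
4-sphere as a subcomplex: either the standard 4-sphere on 6 of its vertices, or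
the join of the standard spheres on the two parts of a partition
`V(Y) = V₁ ⊔ V₂` with `|V₁|, |V₂| ≥ 2`. -/
theorem seven_vertex_four_dim_contains_sphere {V : Type*} [DecidableEq V]
    (Y : Finset (Finset V)) (hY : IsComplex Y) (hpure : IsPure 4 Y)
    (h7 : (verts Y).card ≤ 7)
    (hdeg : ∀ s ∈ Y, s.card = 4 → 2 ≤ degOf Y 4 s) :
    (∃ S : Finset (Finset V), S ⊆ Y ∧ IsComplex S ∧ IsCombSphere 4 S) ∧
    ((∃ W : Finset V, W ⊆ verts Y ∧ W.card = 6 ∧ stdSphere W ⊆ Y) ∨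
     (∃ V₁ V₂ : Finset V, Disjoint V₁ V₂ ∧ V₁ ∪ V₂ = verts Y ∧
       2 ≤ V₁.card ∧ 2 ≤ V₂.card ∧
       sjoin (stdSphere V₁) (stdSphere V₂) ⊆ Y)) := by
  have h6 := add_two_le_card_verts hY hpure hdeg (by norm_num)
  obtain hcard | hcard : (verts Y).card = 4 + 2 ∨ (verts Y).card = 4 + 3 := by omega
  · have hsub := stdSphere_verts_subset_of_card_verts_eq hY hpure hdeg (by norm_num) hcard
    exact ⟨⟨_, hsub, isComplex_stdSphere (by omega), isCombSphere_stdSphere hcard⟩,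
      Or.inl ⟨_, subset_rfl, hcard, hsub⟩⟩
  have hcases := stdSphere_or_sjoin_subset_of_card_verts_eq hY hpure hdeg (by norm_num) hcard
  refine ⟨?_, hcases⟩
  rcases hcases with ⟨W, -, hW, hsub⟩ | ⟨V₁, V₂, hdisj, hunion, h1, h2, hsub⟩
  · exact ⟨_, hsub, isComplex_stdSphere (by omega), isCombSphere_stdSphere hW⟩
  · have hsum : V₁.card + V₂.card = 4 + 3 := by
      rw [← card_union_of_disjoint hdisj, hunion, hcard]
    exact ⟨_, hsub, isComplex_sjoin_stdSphere hdisj h1 h2,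
      isCombSphere_sjoin_stdSphere hdisj h1 h2 hsum⟩

end HomologySpheres
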